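/- Let A₁, A₂ be a subsequence (in order) of a vertex-separated loose path of k-uniform hypergraphs. Then there exist edges e₁ ∈ A₁ and e₂ ∈ A₂ such that V(A₁) ∩ V(A₂) ⊆ e₁ ∩ e₂. -/
import Mathlib


open Finset

/-- The vertex set (support) of a hypergraph given by its edge set. -/
def verts (A : Finset (Finset ℕ)) : Finset ℕ := A.sup id

/-- The edge set of the induced subhypergraph `A[U]`. -/
def ind (A : Finset (Finset ℕ)) (U : Finset ℕ) : Finset (Finset ℕ) := A.filter (· ⊆ U)

/-- The density of the template `(A[U], I)`, where `A[U]` carries the vertex set `U`: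
`(e(A[U]) - e(A[I])) / (|U| - |I|)`, and `0` if `U = I`. -/
def dens (A : Finset (Finset ℕ)) (U I : Finset ℕ) : ℚ :=
  if U = I then 0
  else (((ind A U).card : ℚ) - ((ind A I).card : ℚ)) / ((U.card : ℚ) - (I.card : ℚ))

/-- The density `ρ_{A,I}` of the template `(A, I)` (whose vertex set is `verts A ∪ I`). -/
def tdens (A : Finset (Finset ℕ)) (I : Finset ℕ) : ℚ := dens A (verts A ∪ I) I

/-- The `k`-density `ρ_A = (e(A) - 1)/(v(A) - k)` of a `k`-uniform hypergraph. -/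
def kdens (k : ℕ) (A : Finset (Finset ℕ)) : ℚ :=
  ((A.card : ℚ) - 1) / (((verts A).card : ℚ) - (k : ℚ))

/-- The template `(A, I)` is strictly balanced: every proper subtemplate `(B, I) ⊆ (A, I)`
(`B = A[U]` with vertex set `U`, `I ⊆ U`, `V(B) = U ≠ I`, `B ≠ A`) has strictly smaller
density. -/
def StrictBalT (A : Finset (Finset ℕ)) (I : Finset ℕ) : Prop :=
  ∀ U : Finset ℕ, I ⊆ U → U ⊂ verts A ∪ I → U ≠ I → dens A U I < tdens A I

/-- The union of the hypergraphs `B j` over `j ∈ s`. -/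
def pUnion (B : ℕ → Finset (Finset ℕ)) (s : Finset ℕ) : Finset (Finset ℕ) := s.biUnion B

/-- `qfun B i = 1 + ∑_{j < i} (|B j| - 1)`. -/
def qfun (B : ℕ → Finset (Finset ℕ)) (i : ℕ) : ℕ :=
  1 + ∑ j ∈ Finset.range i, ((B j).card - 1)

/-- `B 0, …, B (n-1)` is a vertex-separated loose path starting at `I`: there is an
enumeration `e 0, …, e (qfun B n - 1)` of the edges of `B 0 + … + B (n-1)` with `e 0 = I`,
each `B i` consisting of the block of edges with indices in `[qfun B i - 1, qfun B (i+1) - 1]`,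
such that for each `0 < i < n` the vertex sets of `B 0 + … + B (i-1)` and of
`B i + … + B (n-1)` intersect exactly in the shared edge `e (qfun B i - 1)`. -/
def IsVSLoosePath (n : ℕ) (B : ℕ → Finset (Finset ℕ)) (I : Finset ℕ) : Prop :=
  ∃ e : ℕ → Finset ℕ,
    (∀ i < qfun B n, ∀ j < qfun B n, e i = e j → i = j) ∧
    e 0 = I ∧
    (∀ i < n, B i =
      ((Finset.range (qfun B n)).filter
          (fun j => qfun B i - 1 ≤ j ∧ j ≤ qfun B (i + 1) - 1)).image e) ∧
    (∀ i, 0 < i → i < n →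
      verts (pUnion B (Finset.range i)) ∩
          verts (pUnion B ((Finset.range n).filter (fun j => i ≤ j))) =
        e (qfun B i - 1))

/-- `B'` is a copy of `F`. -/
def IsCopy (F B' : Finset (Finset ℕ)) : Prop :=
  ∃ φ : ℕ → ℕ, Set.InjOn φ ↑(verts F) ∧ B' = F.image (fun f => f.image φ)

lemma verts_mono {A B : Finset (Finset ℕ)} (h : A ⊆ B) : verts A ⊆ verts B :=
  Finset.le_iff_subset.mp (Finset.sup_mono h)

/-- if `A₁ = B i` and `A₂ = B j` (`i < j`) are members of a vertex-separated
loose path of `k`-graphs, then there are edges `e₁ ∈ A₁` and `e₂ ∈ A₂` with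
`V(A₁) ∩ V(A₂) ⊆ e₁ ∩ e₂`. -/
theorem connecting_edges
    (k : ℕ) (hk : 2 ≤ k)
    (n : ℕ) (B : ℕ → Finset (Finset ℕ))
    (hunif : ∀ i < n, ∀ e ∈ B i, e.card = k)
    (I0 : Finset ℕ) (hI0 : I0.card = k)
    (hpath : IsVSLoosePath n B I0)
    (i j : ℕ) (hij : i < j) (hjn : j < n) :
    ∃ e₁ ∈ B i, ∃ e₂ ∈ B j, verts (B i) ∩ verts (B j) ⊆ e₁ ∩ e₂ := by
  obtain ⟨e, hinj, he0, hblk, hsep⟩ := hpath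
  have hqmono : ∀ a b : ℕ, a ≤ b → qfun B a ≤ qfun B b := by
    intro a b hab
    exact Nat.add_le_add_left (Finset.sum_le_sum_of_subset (Finset.range_subset_range.2 hab)) 1
  have hq1 : ∀ m, 1 ≤ qfun B m := fun m => Nat.le_add_right 1 _
  have hin : i < n := hij.trans hjn
  have hi1j : i + 1 ≤ j := hij
  have hi1n : i + 1 < n := lt_of_le_of_lt hi1j hjn
  have h1 : qfun B (i+1) ≤ qfun B n := hqmono _ _ (by omega)
  have h2 : qfun B i ≤ qfun B (i+1) := hqmono _ _ (by omega)
  have h3 : qfun B j ≤ qfun B (j+1) := hqmono _ _ (by omega)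
  have h4 : qfun B (j+1) ≤ qfun B n := hqmono _ _ (by omega)
  have he₁ : e (qfun B (i+1) - 1) ∈ B i := by
    rw [hblk i hin]
    apply Finset.mem_image_of_mem
    simp only [Finset.mem_filter, Finset.mem_range]
    have := hq1 (i+1); have := hq1 n
    refine ⟨by omega, by omega, le_refl _⟩
  have he₂ : e (qfun B j - 1) ∈ B j := by
    rw [hblk j hjn]
    apply Finset.mem_image_of_mem
    simp only [Finset.mem_filter, Finset.mem_range]
    have := hq1 j; have := hq1 n
    refine ⟨by omega, le_refl _, by omega⟩
  refine ⟨_, he₁, _, he₂, ?_⟩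
  intro x hx
  rw [Finset.mem_inter] at hx
  obtain ⟨hx1, hx2⟩ := hx
  rw [Finset.mem_inter]
  constructor
  · rw [← hsep (i+1) (Nat.succ_pos i) hi1n, Finset.mem_inter]
    constructor
    · exact verts_mono (Finset.subset_biUnion_of_mem B (Finset.self_mem_range_succ i)) hx1
    · refine verts_mono (Finset.subset_biUnion_of_mem B ?_) hx2
      simp only [Finset.mem_filter, Finset.mem_range]
      exact ⟨hjn, hi1j⟩
  · rw [← hsep j (by omega) hjn, Finset.mem_inter]
    constructor
    · exact verts_mono (Finset.subset_biUnion_of_mem B (Finset.mem_range.2 hij)) hx1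
    · refine verts_mono (Finset.subset_biUnion_of_mem B ?_) hx2
      simp only [Finset.mem_filter, Finset.mem_range]
      exact ⟨hjn, le_refl j⟩
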